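/- Let (Ω, 𝒜, P) be a probability space, (S, 𝔖) and (T, 𝔗) measurable spaces, and (X, Y) : Ω → S × T a measurable pair. Let h : S × T → ℝ be measurable and uniformly bounded, ‖h‖_∞ = sup_{(x,y) ∈ S×T} |h(x, y)| < ∞. Then, without any absolute continuity assumption on the joint law, |∫_{S×T} h dP_{(X,Y)} − ∫_{S×T} h d(P_X ⊗ P_Y)| ≤ 2 ‖h‖_∞ β(X, Y). -/

import Mathlib

open MeasureTheory Real Filter Set
open scoped ENNReal NNReal

/-- β-mixing coefficient between two sub-σ-algebras. -/
noncomputable def betaMix {Ω : Type*} [MeasurableSpace Ω] (P : Measure Ω)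
    (F G : MeasurableSpace Ω) : ℝ :=
  (1 / 2) * sSup { r : ℝ | ∃ (n m : ℕ) (U : Fin n → Set Ω) (V : Fin m → Set Ω),
      (∀ i, MeasurableSet[F] (U i)) ∧ (∀ j, MeasurableSet[G] (V j)) ∧
      Pairwise (Function.onFun Disjoint U) ∧ Pairwise (Function.onFun Disjoint V) ∧
      (⋃ i, U i) = Set.univ ∧ (⋃ j, V j) = Set.univ ∧
      r = ∑ i, ∑ j, |(P (U i ∩ V j)).toReal - (P (U i)).toReal * (P (V j)).toReal| }

/-- β-mixing coefficient of two random variables. -/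
noncomputable def betaRV {Ω S T : Type*} [MeasurableSpace Ω] [MeasurableSpace S]
    [MeasurableSpace T] (P : Measure Ω) (X : Ω → S) (Y : Ω → T) : ℝ :=
  betaMix P (MeasurableSpace.comap X inferInstance) (MeasurableSpace.comap Y inferInstance)

/-- β-mixing coefficients of a process indexed by ℤ. -/
noncomputable def betaProc {Ω S : Type*} [MeasurableSpace Ω] [MeasurableSpace S]
    (P : Measure Ω) (X : ℤ → Ω → S) (n : ℕ) : ℝ :=
  ⨆ k : ℕ, betaMix P
    (⨆ s : ℤ, ⨆ _ : s ≤ (k : ℤ), MeasurableSpace.comap (X s) inferInstance)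
    (⨆ s : ℤ, ⨆ _ : (k : ℤ) + (n : ℤ) ≤ s, MeasurableSpace.comap (X s) inferInstance)

/-- Stationarity of a process indexed by ℤ. -/
def Stationary {Ω S : Type*} [MeasurableSpace Ω] [MeasurableSpace S]
    (P : Measure Ω) (X : ℤ → Ω → S) : Prop :=
  Measure.map (fun ω => fun i : ℤ => X (i + 1) ω) P
    = Measure.map (fun ω => fun i : ℤ => X i ω) P

/-!
By a Hahn decomposition `s` of the joint law `μ` against the product `ν` of the marginals,
`|∫ h dμ - ∫ h dν| ≤ ‖h‖_∞ ((μ - ν)(s) - (μ - ν)(sᶜ))`, the total variation of `μ - ν`.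
The sets that are unions of cells `A i ×ˢ B j` of finite measurable grids form an algebra
generating the product σ-algebra, so `s` can be approximated by such a set, and for it the total
variation is at most `∑ i j |μ (A i ×ˢ B j) - ν (A i ×ˢ B j)|`. This is the β-mixing sum of
the partitions `X ⁻¹' A i` and `Y ⁻¹' B j`, hence at most `2 β(X, Y)`.
-/

open Function
open scoped symmDiff

section Partition

variable {α ι κ : Type*}

structure IsMeasurablePartition [mα : MeasurableSpace α] (U : ι → Set α) : Prop where
  measurableSet : ∀ i, MeasurableSet (U i)
  pairwise_disjoint : Pairwise (Disjoint on U)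
  iUnion_eq_univ : ⋃ i, U i = univ

namespace IsMeasurablePartition

lemma mono {m₁ m₂ : MeasurableSpace α} {U : ι → Set α}
    (hU : IsMeasurablePartition (mα := m₁) U) (hm : m₁ ≤ m₂) :
    IsMeasurablePartition (mα := m₂) U := by
  obtain ⟨hUm, hUd, hUu⟩ := hU
  exact .mk (mα := m₂) (fun i => hm _ (hUm i)) hUd hUu

variable [mα : MeasurableSpace α] {U : ι → Set α}

lemma exists_mem (hU : IsMeasurablePartition U) (x : α) : ∃ i, x ∈ U i :=
  mem_iUnion.1 (hU.iUnion_eq_univ ▸ mem_univ x)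

lemma comap {β : Type*} (hU : IsMeasurablePartition U) (f : β → α) :
    IsMeasurablePartition (mα := mα.comap f) fun i => f ⁻¹' U i :=
  .mk (mα := mα.comap f) (fun i => ⟨U i, hU.measurableSet i, rfl⟩)
    (fun _ _ hij => (hU.pairwise_disjoint hij).preimage f)
    (by rw [← preimage_iUnion, hU.iUnion_eq_univ, preimage_univ])

lemma comp_equiv (hU : IsMeasurablePartition U) (e : κ ≃ ι) : IsMeasurablePartition (U ∘ e) :=
  ⟨fun _ => hU.measurableSet _, fun _ _ hij => hU.pairwise_disjoint (e.injective.ne hij),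
    (e.surjective.iUnion_comp U).trans hU.iUnion_eq_univ⟩

lemma const_univ [Unique ι] : IsMeasurablePartition fun _ : ι => (univ : Set α) :=
  ⟨fun _ => .univ, Subsingleton.pairwise, iUnion_const _⟩

lemma cond {s : Set α} (hs : MeasurableSet s) :
    IsMeasurablePartition fun b : Bool => bif b then s else sᶜ := by
  refine ⟨fun b => ?_, ?_, ?_⟩
  · cases b
    exacts [hs.compl, hs]
  · rintro (_ | _) (_ | _) h
    all_goals first
      | exact absurd rfl h
      | exact disjoint_compl_left
      | exact disjoint_compl_right
  · ext x
    by_cases hx : x ∈ s <;> simp [hx]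

lemma inter {V : κ → Set α} (hU : IsMeasurablePartition U) (hV : IsMeasurablePartition V) :
    IsMeasurablePartition fun p : ι × κ => U p.1 ∩ V p.2 := by
  refine ⟨fun p => (hU.measurableSet p.1).inter (hV.measurableSet p.2), ?_, ?_⟩
  · rintro ⟨i, j⟩ ⟨i', j'⟩ h
    rcases not_and_or.mp (Prod.ext_iff.not.mp h) with hi | hj
    · exact (hU.pairwise_disjoint hi).mono inter_subset_left inter_subset_left
    · exact (hV.pairwise_disjoint hj).mono inter_subset_right inter_subset_right
  · refine eq_univ_of_forall fun x => ?_
    obtain ⟨i, hi⟩ := hU.exists_mem x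
    obtain ⟨j, hj⟩ := hV.exists_mem x
    exact mem_iUnion.2 ⟨(i, j), hi, hj⟩

lemma prod {β : Type*} [MeasurableSpace β] {V : κ → Set β} (hU : IsMeasurablePartition U)
    (hV : IsMeasurablePartition V) : IsMeasurablePartition fun p : ι × κ => U p.1 ×ˢ V p.2 := by
  refine ⟨fun p => (hU.measurableSet p.1).prod (hV.measurableSet p.2), ?_, ?_⟩
  · rintro ⟨i, j⟩ ⟨i', j'⟩ h
    rcases not_and_or.mp (Prod.ext_iff.not.mp h) with hi | hj
    · exact (hU.pairwise_disjoint hi).set_prod_left _ _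
    · exact (hV.pairwise_disjoint hj).set_prod_right _ _
  · refine eq_univ_of_forall fun z => ?_
    obtain ⟨i, hi⟩ := hU.exists_mem z.1
    obtain ⟨j, hj⟩ := hV.exists_mem z.2
    exact mem_iUnion.2 ⟨(i, j), hi, hj⟩

lemma measurableSet_of_forall_subset_or_disjoint [Finite ι] (hU : IsMeasurablePartition U)
    {E : Set α} (hE : ∀ i, U i ⊆ E ∨ Disjoint (U i) E) : MeasurableSet E := by
  have hunion : E = ⋃ i, U i ∩ E := by rw [← iUnion_inter, hU.iUnion_eq_univ, univ_inter]
  rw [hunion]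
  refine .iUnion fun i => ?_
  rcases hE i with hsub | hdisj
  · rw [inter_eq_left.2 hsub]
    exact hU.measurableSet i
  · rw [hdisj.inter_eq]
    exact .empty

variable [Fintype ι] (μ : Measure α)

lemma sum_measureReal_inter [IsFiniteMeasure μ] (hU : IsMeasurablePartition U) {t : Set α}
    (ht : MeasurableSet t) :
    ∑ i, μ.real (t ∩ U i) = μ.real t := by
  rw [← measureReal_iUnion_fintype
    (fun i j hij => (hU.pairwise_disjoint hij).mono inter_subset_right inter_subset_right)
    (fun i => ht.inter (hU.measurableSet i)), ← inter_iUnion, hU.iUnion_eq_univ, inter_univ]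

lemma sum_measureReal [IsFiniteMeasure μ] (hU : IsMeasurablePartition U) :
    ∑ i, μ.real (U i) = μ.real univ := by
  simpa only [univ_inter] using hU.sum_measureReal_inter μ .univ

lemma sum_abs_measureReal_inter_sub_mul_le_two [IsProbabilityMeasure μ] [Fintype κ]
    {V : κ → Set α} (hU : IsMeasurablePartition U) (hV : IsMeasurablePartition V) :
    ∑ i, ∑ j, |μ.real (U i ∩ V j) - μ.real (U i) * μ.real (V j)| ≤ 2 :=
  calc ∑ i, ∑ j, |μ.real (U i ∩ V j) - μ.real (U i) * μ.real (V j)|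
      ≤ ∑ i, ∑ j, (μ.real (U i ∩ V j) + μ.real (U i) * μ.real (V j)) := by
        gcongr with i _ j _
        have hinter : 0 ≤ μ.real (U i ∩ V j) := measureReal_nonneg
        have hprod : 0 ≤ μ.real (U i) * μ.real (V j) := by positivity
        exact abs_sub_le_of_nonneg_of_le hinter (le_add_of_nonneg_right hprod) hprod
          (le_add_of_nonneg_left hinter)
    _ = 2 := by
        simp only [Finset.sum_add_distrib, ← Finset.sum_mul_sum, hV.sum_measureReal_inter μ
          (hU.measurableSet _), hU.sum_measureReal μ, hV.sum_measureReal μ, probReal_univ]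
        norm_num

lemma measureReal_sub_add_compl_le_sum_abs [IsFiniteMeasure μ] (hU : IsMeasurablePartition U)
    (ν : Measure α) [IsFiniteMeasure ν] {E : Set α} (hE : ∀ i, U i ⊆ E ∨ Disjoint (U i) E) :
    (μ.real E - ν.real E) + (ν.real Eᶜ - μ.real Eᶜ) ≤ ∑ i, |μ.real (U i) - ν.real (U i)| := by
  have hEm := hU.measurableSet_of_forall_subset_or_disjoint hE
  rw [← hU.sum_measureReal_inter μ hEm, ← hU.sum_measureReal_inter ν hEm,
    ← hU.sum_measureReal_inter μ hEm.compl, ← hU.sum_measureReal_inter ν hEm.compl,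
    ← Finset.sum_sub_distrib, ← Finset.sum_sub_distrib, ← Finset.sum_add_distrib]
  gcongr with i
  rcases hE i with hsub | hdisj
  · rw [inter_eq_right.2 hsub, (disjoint_compl_left.mono_right hsub).inter_eq, measureReal_empty,
      measureReal_empty, sub_self, add_zero]
    exact le_abs_self _
  · rw [hdisj.symm.inter_eq, inter_eq_right.2 hdisj.subset_compl_right, measureReal_empty,
      measureReal_empty, sub_self, zero_add]
    exact (le_abs_self _).trans_eq (abs_sub_comm _ _)

end IsMeasurablePartition

end Partition

section BetaMixing

variable {Ω S T : Type*} [mΩ : MeasurableSpace Ω]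

lemma sum_abs_measureReal_inter_sub_mul_le_two_mul_betaMix (P : Measure Ω)
    [IsProbabilityMeasure P] {F G : MeasurableSpace Ω} (hF : F ≤ mΩ) (hG : G ≤ mΩ) {n m : ℕ}
    {U : Fin n → Set Ω} {V : Fin m → Set Ω} (hU : IsMeasurablePartition (mα := F) U)
    (hV : IsMeasurablePartition (mα := G) V) :
    ∑ i, ∑ j, |P.real (U i ∩ V j) - P.real (U i) * P.real (V j)|
      ≤ 2 * @betaMix Ω mΩ P F G := by
  -- `F` and `G` are local instances too, so every use of the ambient σ-algebra names `mΩ`.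
  obtain ⟨hUm, hUd, hUu⟩ := hU
  obtain ⟨hVm, hVd, hVu⟩ := hV
  unfold betaMix
  rw [← mul_assoc, show (2 : ℝ) * (1 / 2) = 1 by norm_num, one_mul]
  refine le_csSup ⟨2, ?_⟩ ⟨n, m, U, V, hUm, hVm, hUd, hVd, hUu, hVu, rfl⟩
  rintro r ⟨n, m, U, V, hUm, hVm, hUd, hVd, hUu, hVu, rfl⟩
  exact IsMeasurablePartition.sum_abs_measureReal_inter_sub_mul_le_two (mα := mΩ) P
    ((IsMeasurablePartition.mk (mα := F) hUm hUd hUu).mono hF)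
    ((IsMeasurablePartition.mk (mα := G) hVm hVd hVu).mono hG)

lemma sum_abs_map_prodMk_sub_prod_map_le_two_mul_betaRV [MeasurableSpace S] [MeasurableSpace T]
    (P : Measure Ω) [IsProbabilityMeasure P] {X : Ω → S} {Y : Ω → T} (hX : Measurable X)
    (hY : Measurable Y) {n m : ℕ} {A : Fin n → Set S} {B : Fin m → Set T}
    (hA : IsMeasurablePartition A) (hB : IsMeasurablePartition B) :
    ∑ i, ∑ j, |(P.map fun ω => (X ω, Y ω)).real (A i ×ˢ B j)
      - ((P.map X).prod (P.map Y)).real (A i ×ˢ B j)| ≤ 2 * betaRV P X Y := by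
  simp only [measureReal_prod_prod,
    map_measureReal_apply (hX.prodMk hY) ((hA.measurableSet _).prod (hB.measurableSet _)),
    map_measureReal_apply hX (hA.measurableSet _),
    map_measureReal_apply hY (hB.measurableSet _), mk_preimage_prod]
  exact sum_abs_measureReal_inter_sub_mul_le_two_mul_betaMix P hX.comap_le hY.comap_le
    (hA.comap X) (hB.comap Y)

end BetaMixing

section HahnDecomposition

variable {α : Type*} [MeasurableSpace α] {μ ν : Measure α} {f : α → ℝ} {M : ℝ}

lemma abs_integral_sub_integral_le_of_le [IsFiniteMeasure μ] (hνμ : ν ≤ μ)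
    (hf : Integrable f μ) (hM : ∀ᵐ x ∂μ, |f x| ≤ M) :
    |∫ x, f x ∂μ - ∫ x, f x ∂ν| ≤ M * (μ.real univ - ν.real univ) := by
  have : IsFiniteMeasure ν := isFiniteMeasure_of_le μ hνμ
  have hdecomp : ∫ x, f x ∂μ = ∫ x, f x ∂(μ - ν) + ∫ x, f x ∂ν := by
    conv_lhs => rw [← Measure.sub_add_cancel_of_le hνμ]
    exact integral_add_measure (hf.mono_measure Measure.sub_le) (hf.mono_measure hνμ)
  have hmass : (μ - ν).real univ = μ.real univ - ν.real univ := by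
    rw [measureReal_def, Measure.sub_apply .univ hνμ,
      ENNReal.toReal_sub_of_le (hνμ univ) (measure_ne_top _ _), measureReal_def, measureReal_def]
  rw [hdecomp, add_sub_cancel_right, ← hmass, ← Real.norm_eq_abs]
  exact norm_integral_le_of_norm_le_const (ae_mono Measure.sub_le hM)

lemma restrict_le_restrict_of_forall_subset {s : Set α} (hs : MeasurableSet s)
    (h : ∀ t, MeasurableSet t → t ⊆ s → ν t ≤ μ t) : ν.restrict s ≤ μ.restrict s :=
  Measure.le_iff.2 fun t ht => by
    simpa only [Measure.restrict_apply ht] using h _ (ht.inter hs) inter_subset_right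

lemma abs_integral_sub_integral_le_of_hahn [IsFiniteMeasure μ] [IsFiniteMeasure ν] {s : Set α}
    (hs : MeasurableSet s) (h₁ : ∀ t, MeasurableSet t → t ⊆ s → ν t ≤ μ t)
    (h₂ : ∀ t, MeasurableSet t → t ⊆ sᶜ → μ t ≤ ν t) (hf : Measurable f) (hM : ∀ x, |f x| ≤ M) :
    |∫ x, f x ∂μ - ∫ x, f x ∂ν| ≤ M * ((μ.real s - ν.real s) + (ν.real sᶜ - μ.real sᶜ)) := by
  have hint : ∀ (ρ : Measure α) [IsFiniteMeasure ρ], Integrable f ρ := fun ρ _ =>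
    .of_bound hf.aestronglyMeasurable M
      (ae_of_all _ fun x => (Real.norm_eq_abs _).trans_le (hM x))
  have hon := abs_integral_sub_integral_le_of_le (restrict_le_restrict_of_forall_subset hs h₁)
    (hint _) (ae_of_all _ hM)
  have hoff := abs_integral_sub_integral_le_of_le
    (restrict_le_restrict_of_forall_subset hs.compl h₂) (hint _) (ae_of_all _ hM)
  simp only [measureReal_restrict_apply_univ] at hon hoff
  calc |∫ x, f x ∂μ - ∫ x, f x ∂ν|
      = |(∫ x in s, f x ∂μ - ∫ x in s, f x ∂ν)
          - (∫ x in sᶜ, f x ∂ν - ∫ x in sᶜ, f x ∂μ)| := by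
        rw [← integral_add_compl hs (hint μ), ← integral_add_compl hs (hint ν)]
        ring_nf
    _ ≤ M * (μ.real s - ν.real s) + M * (ν.real sᶜ - μ.real sᶜ) :=
        (abs_sub _ _).trans (add_le_add hon hoff)
    _ = M * ((μ.real s - ν.real s) + (ν.real sᶜ - μ.real sᶜ)) := by ring

lemma measureReal_sub_add_compl_le_add_symmDiff (μ ν : Measure α) [IsFiniteMeasure μ]
    [IsFiniteMeasure ν] {s t : Set α} (hs : MeasurableSet s) (ht : MeasurableSet t) :
    (μ.real s - ν.real s) + (ν.real sᶜ - μ.real sᶜ)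
      ≤ (μ.real t - ν.real t) + (ν.real tᶜ - μ.real tᶜ) + 2 * (μ + ν).real (s ∆ t) := by
  have hμ := abs_measureReal_sub_le_measureReal_symmDiff (μ := μ) hs.nullMeasurableSet
    ht.nullMeasurableSet
  have hν := abs_measureReal_sub_le_measureReal_symmDiff (μ := ν) hs.nullMeasurableSet
    ht.nullMeasurableSet
  have hμc := abs_measureReal_sub_le_measureReal_symmDiff (μ := μ) hs.compl.nullMeasurableSet
    ht.compl.nullMeasurableSet
  have hνc := abs_measureReal_sub_le_measureReal_symmDiff (μ := ν) hs.compl.nullMeasurableSet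
    ht.compl.nullMeasurableSet
  rw [compl_symmDiff_compl] at hμc hνc
  rw [measureReal_add_apply]
  linarith [le_abs_self (μ.real s - μ.real t), neg_abs_le (ν.real s - ν.real t),
    neg_abs_le (μ.real sᶜ - μ.real tᶜ), le_abs_self (ν.real sᶜ - ν.real tᶜ)]

end HahnDecomposition

section Grid

variable {S T ι κ : Type*} [MeasurableSpace S] [MeasurableSpace T]

variable (S T) in
def gridSets : Set (Set (S × T)) :=
  {E | ∃ (n m : ℕ) (A : Fin n → Set S) (B : Fin m → Set T), IsMeasurablePartition A ∧
    IsMeasurablePartition B ∧ ∀ i j, A i ×ˢ B j ⊆ E ∨ Disjoint (A i ×ˢ B j) E}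

lemma mem_gridSets [Fintype ι] [Fintype κ] {A : ι → Set S} {B : κ → Set T}
    (hA : IsMeasurablePartition A) (hB : IsMeasurablePartition B) {E : Set (S × T)}
    (hE : ∀ i j, A i ×ˢ B j ⊆ E ∨ Disjoint (A i ×ˢ B j) E) : E ∈ gridSets S T :=
  ⟨_, _, A ∘ (Fintype.equivFin ι).symm, B ∘ (Fintype.equivFin κ).symm, hA.comp_equiv _,
    hB.comp_equiv _, fun _ _ => hE _ _⟩

lemma isSetAlgebra_gridSets : IsSetAlgebra (gridSets S T) where
  empty_mem := mem_gridSets (ι := Unit) (κ := Unit) .const_univ .const_univ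
    fun _ _ => .inr (disjoint_empty _)
  compl_mem := by
    rintro E ⟨n, m, A, B, hA, hB, hE⟩
    exact ⟨n, m, A, B, hA, hB, fun i j =>
      (hE i j).symm.imp Disjoint.subset_compl_right disjoint_compl_right_iff_subset.2⟩
  union_mem := by
    rintro E E' ⟨n, m, A, B, hA, hB, hE⟩ ⟨n', m', A', B', hA', hB', hE'⟩
    refine mem_gridSets (hA.inter hA') (hB.inter hB') fun i j => ?_
    have hsub : (A i.1 ∩ A' i.2) ×ˢ (B j.1 ∩ B' j.2) ⊆ A i.1 ×ˢ B j.1 :=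
      prod_mono inter_subset_left inter_subset_left
    have hsub' : (A i.1 ∩ A' i.2) ×ˢ (B j.1 ∩ B' j.2) ⊆ A' i.2 ×ˢ B' j.2 :=
      prod_mono inter_subset_right inter_subset_right
    rcases hE i.1 j.1 with hin | hout
    · exact .inl ((hsub.trans hin).trans subset_union_left)
    rcases hE' i.2 j.2 with hin' | hout'
    · exact .inl ((hsub'.trans hin').trans subset_union_right)
    · exact .inr (disjoint_union_right.2 ⟨hout.mono_left hsub, hout'.mono_left hsub'⟩)

lemma generateFrom_gridSets :
    MeasurableSpace.generateFrom (gridSets S T) = Prod.instMeasurableSpace := by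
  refine le_antisymm (MeasurableSpace.generateFrom_le ?_) ?_
  · rintro E ⟨n, m, A, B, hA, hB, hE⟩
    exact (hA.prod hB).measurableSet_of_forall_subset_or_disjoint fun p => hE p.1 p.2
  rw [← generateFrom_prod]
  refine MeasurableSpace.generateFrom_mono ?_
  rintro _ ⟨A, hA, B, hB, rfl⟩
  refine mem_gridSets (.cond hA) (.cond hB) ?_
  rintro (_ | _) (_ | _)
  · exact .inr (disjoint_compl_left.set_prod_left _ _)
  · exact .inr (disjoint_compl_left.set_prod_left _ _)
  · exact .inr (disjoint_compl_left.set_prod_right _ _)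
  · exact .inl subset_rfl

lemma measureReal_sub_add_compl_le_of_forall_grid {μ ν : Measure (S × T)} [IsFiniteMeasure μ]
    [IsFiniteMeasure ν] {C : ℝ}
    (hC : ∀ (n m : ℕ) (A : Fin n → Set S) (B : Fin m → Set T), IsMeasurablePartition A →
      IsMeasurablePartition B → ∑ i, ∑ j, |μ.real (A i ×ˢ B j) - ν.real (A i ×ˢ B j)| ≤ C)
    {s : Set (S × T)} (hs : MeasurableSet s) :
    (μ.real s - ν.real s) + (ν.real sᶜ - μ.real sᶜ) ≤ C := by
  refine le_of_forall_pos_le_add fun ε hε => ?_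
  have hdense := Measure.MeasureDense.of_generateFrom_isSetAlgebra_finite (μ + ν)
    isSetAlgebra_gridSets generateFrom_gridSets.symm
  obtain ⟨E, hEgrid, hsE⟩ := hdense.approx s hs (measure_ne_top _ _) (ε / 2) (half_pos hε)
  have happrox := measureReal_sub_add_compl_le_add_symmDiff μ ν hs (hdense.measurable E hEgrid)
  obtain ⟨n, m, A, B, hA, hB, hE⟩ := hEgrid
  have hgrid : (μ.real E - ν.real E) + (ν.real Eᶜ - μ.real Eᶜ) ≤ C := by
    refine ((hA.prod hB).measureReal_sub_add_compl_le_sum_abs μ ν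
      fun p => hE p.1 p.2).trans ?_
    rw [Fintype.sum_prod_type]
    exact hC n m A B hA hB
  have hsmall : (μ + ν).real (s ∆ E) < ε / 2 := ENNReal.toReal_lt_of_lt_ofReal hsE
  linarith

end Grid

/-- Proposition 3.1, second part: for a uniformly bounded measurable
function `h`, the difference between the integral with respect to the joint law and the
integral with respect to the product of the marginals is bounded by `2 ‖h‖_∞ β(X, Y)`,
without any absolute-continuity assumption. -/
theorem beta_mixing_integrability_bounded
    {Ω S T : Type*} [MeasurableSpace Ω] [MeasurableSpace S] [MeasurableSpace T]
    (P : Measure Ω) [IsProbabilityMeasure P]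
    (X : Ω → S) (Y : Ω → T) (hX : Measurable X) (hY : Measurable Y)
    (h : S × T → ℝ) (hh : Measurable h)
    (hbdd : BddAbove (Set.range fun z => |h z|)) :
    |∫ z, h z ∂(Measure.map (fun ω => (X ω, Y ω)) P)
        - ∫ z, h z ∂((P.map X).prod (P.map Y))|
      ≤ 2 * (⨆ z : S × T, |h z|) * betaRV P X Y := by
  have : IsProbabilityMeasure (P.map fun ω => (X ω, Y ω)) :=
    Measure.isProbabilityMeasure_map (hX.prodMk hY).aemeasurable
  obtain ⟨s, hs, h₁, h₂⟩ := hahn_decomposition (P.map fun ω => (X ω, Y ω))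
    ((P.map X).prod (P.map Y))
  have hvariation := measureReal_sub_add_compl_le_of_forall_grid
    (fun n m A B hA hB => sum_abs_map_prodMk_sub_prod_map_le_two_mul_betaRV P hX hY hA hB) hs
  calc _ ≤ (⨆ z, |h z|) * (2 * betaRV P X Y) :=
        (abs_integral_sub_integral_le_of_hahn hs h₁ h₂ hh (le_ciSup hbdd)).trans
          (mul_le_mul_of_nonneg_left hvariation (Real.iSup_nonneg fun z => abs_nonneg (h z)))
    _ = 2 * (⨆ z, |h z|) * betaRV P X Y := by ring
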